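/- Every minimal generator of the intersection ideal V_n ∩ U_n either is divisible by y_{n-1} or is divisible by x_{n-2}x_{2n-3}, and not both, yielding a decomposition V_n ∩ U_n = V̂_n + Û_n into the ideals generated by the respective subsets of minimal generators. -/

import Mathlib

/-- The vertical domino occupying column `k` (0-indexed) of a 2×n board. -/
def Vert (k : ℕ) : Finset (ℕ × ℕ) := {(0, k), (1, k)}

/-- The horizontal domino in row `i` covering columns `k` and `k+1`. -/
def Horiz (i k : ℕ) : Finset (ℕ × ℕ) := {(i, k), (i, k + 1)}

/-- A domino on the 2×n board. -/
def IsDomino (n : ℕ) (d : Finset (ℕ × ℕ)) : Prop :=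
  (∃ k < n, d = Vert k) ∨ (∃ i < 2, ∃ k, k + 1 < n ∧ d = Horiz i k)

/-- `T` is a domino tiling of the 2×n board: a set of dominoes, pairwise disjoint,
covering exactly the cells of the board. -/
def IsTiling (n : ℕ) (T : Finset (Finset (ℕ × ℕ))) : Prop :=
  (∀ d ∈ T, IsDomino n d) ∧
  (∀ c : ℕ × ℕ, (c.1 < 2 ∧ c.2 < n) ↔ ∃ d ∈ T, c ∈ d) ∧
  (∀ d ∈ T, ∀ e ∈ T, d ≠ e → Disjoint d e)

/-- `T_n`, the set of all domino tilings of the 2×n rectangle. -/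
def Tilings (n : ℕ) : Set (Finset (Finset (ℕ × ℕ))) := {T | IsTiling n T}

open scoped Classical

/-- The variable (in the paper's 1-indexed labelling) attached to a domino of the 2×n board:
the vertical domino in column k (1-indexed) ↦ y_k = `Sum.inr k`, the top horizontal domino
starting in column k ↦ x_k = `Sum.inl k`, the bottom one ↦ x_{n-1+k} = `Sum.inl (n-1+k)`. -/
noncomputable def dominoVar (n : ℕ) (d : Finset (ℕ × ℕ)) : ℕ ⊕ ℕ :=
  if h : ∃ k, d = Vert k then Sum.inr (h.choose + 1)
  else if h2 : ∃ k, d = Horiz 0 k then Sum.inl (h2.choose + 1)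
  else if h3 : ∃ k, d = Horiz 1 k then Sum.inl (n + h3.choose)
  else Sum.inl 0

/-- The squarefree monomial (in `K[x_1,…,x_{2n-2},y_1,…,y_n]`, realized as
`MvPolynomial (ℕ ⊕ ℕ) K` with x_i = `X (Sum.inl i)` and y_i = `X (Sum.inr i)`)
associated to a tiling `T`, using the labelling of the 2×n board. -/
noncomputable def dominoMonomial (K : Type*) [Field K] (n : ℕ)
    (T : Finset (Finset (ℕ × ℕ))) : MvPolynomial (ℕ ⊕ ℕ) K :=
  ∏ d ∈ T, MvPolynomial.X (dominoVar n d)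

/-- The ideal generated by the tiling monomials of all tilings of a 2×m rectangle,
labelled as dominoes of the ambient 2×n board. -/
noncomputable def dominoIdealIn (K : Type*) [Field K] (n m : ℕ) :
    Ideal (MvPolynomial (ℕ ⊕ ℕ) K) :=
  Ideal.span {p | ∃ T, IsTiling m T ∧ p = dominoMonomial K n T}

/-- The domino ideal `I_n`. -/
noncomputable def dominoIdeal (K : Type*) [Field K] (n : ℕ) :
    Ideal (MvPolynomial (ℕ ⊕ ℕ) K) := dominoIdealIn K n n

/-- `V_n`: the ideal generated by the tilings containing the vertical domino `y_n`. -/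
noncomputable def Vn (K : Type*) [Field K] (n : ℕ) : Ideal (MvPolynomial (ℕ ⊕ ℕ) K) :=
  Ideal.span {p | ∃ T, IsTiling n T ∧ Vert (n - 1) ∈ T ∧ p = dominoMonomial K n T}

/-- `U_n`: the ideal generated by the tilings containing the two rightmost horizontal
dominoes `x_{n-1}` and `x_{2n-2}`. -/
noncomputable def Un (K : Type*) [Field K] (n : ℕ) : Ideal (MvPolynomial (ℕ ⊕ ℕ) K) :=
  Ideal.span {p | ∃ T, IsTiling n T ∧ Horiz 0 (n - 2) ∈ T ∧ Horiz 1 (n - 2) ∈ T ∧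
    p = dominoMonomial K n T}

/-- The set of (exponent vectors of) minimal monomial generators of a monomial ideal:
monomials of the ideal not strictly divisible by any other monomial of the ideal. -/
def minGens {K : Type*} [Field K] {σ : Type*} (I : Ideal (MvPolynomial σ K)) :
    Set (σ →₀ ℕ) :=
  {a | MvPolynomial.monomial a (1 : K) ∈ I ∧
      ∀ b : σ →₀ ℕ, b ≤ a → MvPolynomial.monomial b (1 : K) ∈ I → b = a}

/-!
A monomial ideal spanned by a set `C` of exponents has all its minimal generators in `C` and is
spanned by them. Here `V_n ∩ U_n` is spanned by the lcm's `a ⊔ b` of a tiling `T` containing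
`Vert (n-1)` and a tiling `S` containing `Horiz 0 (n-2)` (the board is 0-indexed). Looking at
the domino of `T` covering the cell `(0, n-2)`: either `Vert (n-2) ∈ T`, giving `y_{n-1} ∣ a`, or
both horizontal dominoes ending in column `n-2` lie in `T`, giving `x_{n-2} x_{2n-3} ∣ a`. The
dominoes of `y_{n-1}`, of `x_{n-2}` and `Horiz 0 (n-2)` all cover that cell, so a tiling contains
at most one of them: `S` contributes neither variable, and `T` not both.
-/

open MvPolynomial

theorem Finsupp.single_one_le_sup_iff {α : Type*} {f g : α →₀ ℕ} {v : α} :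
    single v 1 ≤ f ⊔ g ↔ single v 1 ≤ f ∨ single v 1 ≤ g := by
  simp only [Finsupp.single_le_iff, Finsupp.sup_apply, le_sup_iff]

section MonomialIdeal

variable {σ : Type*}

theorem span_monomial_image_inf_span_monomial_image {R : Type*} [CommSemiring R]
    (A B : Set (σ →₀ ℕ)) :
    Ideal.span ((fun w => monomial w (1 : R)) '' A) ⊓
        Ideal.span ((fun w => monomial w (1 : R)) '' B) =
      Ideal.span ((fun w => monomial w (1 : R)) '' Set.image2 (· ⊔ ·) A B) := by
  ext p
  simp only [Submodule.mem_inf, mem_ideal_span_monomial_image, Set.mem_image2]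
  constructor
  · rintro ⟨hA, hB⟩ xi hxi
    obtain ⟨a, ha, hax⟩ := hA xi hxi
    obtain ⟨b, hb, hbx⟩ := hB xi hxi
    exact ⟨a ⊔ b, ⟨a, ha, b, hb, rfl⟩, sup_le hax hbx⟩
  · intro h
    constructor <;> intro xi hxi <;> obtain ⟨_, ⟨a, ha, b, hb, rfl⟩, hx⟩ := h xi hxi
    exacts [⟨a, ha, le_sup_left.trans hx⟩, ⟨b, hb, le_sup_right.trans hx⟩]

theorem monomial_one_mem_span_monomial_image_iff {R : Type*} [CommSemiring R] [Nontrivial R]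
    {C : Set (σ →₀ ℕ)} {w : σ →₀ ℕ} :
    monomial w (1 : R) ∈ Ideal.span ((fun w => monomial w (1 : R)) '' C) ↔ ∃ c ∈ C, c ≤ w := by
  simp [mem_ideal_span_monomial_image, support_monomial]

variable {K : Type*} [Field K]

theorem exists_mem_minGens_le {I : Ideal (MvPolynomial σ K)} {c : σ →₀ ℕ}
    (hc : monomial c (1 : K) ∈ I) : ∃ w ∈ minGens I, w ≤ c := by
  obtain ⟨w, ⟨hwc, hwI⟩, hmin⟩ :=
    wellFounded_lt.has_min {b | b ≤ c ∧ monomial b (1 : K) ∈ I} ⟨c, le_rfl, hc⟩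
  refine ⟨w, ⟨hwI, fun b hbw hbI => ?_⟩, hwc⟩
  by_contra hne
  exact hmin b ⟨hbw.trans hwc, hbI⟩ (lt_of_le_of_ne hbw hne)

theorem minGens_span_monomial_image_subset (C : Set (σ →₀ ℕ)) :
    minGens (Ideal.span ((fun w => monomial w (1 : K)) '' C)) ⊆ C := by
  rintro w ⟨hw, hmin⟩
  obtain ⟨c, hc, hcw⟩ := monomial_one_mem_span_monomial_image_iff.1 hw
  rwa [← hmin c hcw (Ideal.subset_span ⟨c, hc, rfl⟩)]

theorem eq_span_sup_span_minGens_of_eq_span {I : Ideal (MvPolynomial σ K)} {C : Set (σ →₀ ℕ)}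
    (hI : I = Ideal.span ((fun w => monomial w (1 : K)) '' C)) {P Q : (σ →₀ ℕ) → Prop}
    (hPQ : ∀ w ∈ minGens I, P w ∨ Q w) :
    I = Ideal.span ((fun w => monomial w (1 : K)) '' {w ∈ minGens I | P w}) ⊔
      Ideal.span ((fun w => monomial w (1 : K)) '' {w ∈ minGens I | Q w}) := by
  refine le_antisymm ?_ (sup_le ?_ ?_)
  · rw [← Ideal.span_union, ← Set.image_union]
    nth_rw 1 [hI]
    refine Ideal.span_le.2 ?_
    rintro _ ⟨c, hc, rfl⟩
    have hcI : monomial c (1 : K) ∈ I := hI ▸ Ideal.subset_span ⟨c, hc, rfl⟩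
    obtain ⟨w, hw, hwc⟩ := exists_mem_minGens_le hcI
    exact monomial_one_mem_span_monomial_image_iff.2
      ⟨w, (hPQ w hw).imp (⟨hw, ·⟩) (⟨hw, ·⟩), hwc⟩
  all_goals exact Ideal.span_le.2 (by rintro _ ⟨w, ⟨⟨hw, -⟩, -⟩, rfl⟩; exact hw)

end MonomialIdeal

@[simp] theorem mem_Vert {c : ℕ × ℕ} {k : ℕ} : c ∈ Vert k ↔ c = (0, k) ∨ c = (1, k) := by
  simp [Vert]

@[simp] theorem mem_Horiz {c : ℕ × ℕ} {i k : ℕ} :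
    c ∈ Horiz i k ↔ c = (i, k) ∨ c = (i, k + 1) := by
  simp [Horiz]

theorem Vert_injective : Function.Injective Vert := by
  intro k k' h
  have : ((0 : ℕ), k) ∈ Vert k' := h ▸ mem_Vert.2 (Or.inl rfl)
  simpa using this

theorem Horiz_ne_Vert (i k k' : ℕ) : Horiz i k ≠ Vert k' := by
  intro h
  have h0 : ((0 : ℕ), k') ∈ Horiz i k := h ▸ mem_Vert.2 (Or.inl rfl)
  have h1 : ((1 : ℕ), k') ∈ Horiz i k := h ▸ mem_Vert.2 (Or.inr rfl)
  simp only [mem_Horiz, Prod.mk.injEq] at h0 h1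
  omega

theorem Horiz_inj {i k i' k' : ℕ} : Horiz i k = Horiz i' k' ↔ i = i' ∧ k = k' := by
  refine ⟨fun h => ?_, by rintro ⟨rfl, rfl⟩; rfl⟩
  have h0 : (i, k) ∈ Horiz i' k' := h ▸ mem_Horiz.2 (Or.inl rfl)
  have h1 : (i, k + 1) ∈ Horiz i' k' := h ▸ mem_Horiz.2 (Or.inr rfl)
  simp only [mem_Horiz, Prod.mk.injEq] at h0 h1
  omega

@[simp] theorem dominoVar_Vert (n k : ℕ) : dominoVar n (Vert k) = Sum.inr (k + 1) := by
  have h : ∃ k', Vert k = Vert k' := ⟨k, rfl⟩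
  rw [dominoVar, dif_pos h, ← Vert_injective h.choose_spec]

@[simp] theorem dominoVar_Horiz_zero (n k : ℕ) : dominoVar n (Horiz 0 k) = Sum.inl (k + 1) := by
  have h₁ : ¬∃ k', Horiz 0 k = Vert k' := fun ⟨k', h⟩ => Horiz_ne_Vert _ _ _ h
  have h₂ : ∃ k', Horiz 0 k = Horiz 0 k' := ⟨k, rfl⟩
  rw [dominoVar, dif_neg h₁, dif_pos h₂, ← (Horiz_inj.1 h₂.choose_spec).2]

@[simp] theorem dominoVar_Horiz_one (n k : ℕ) : dominoVar n (Horiz 1 k) = Sum.inl (n + k) := by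
  have h₁ : ¬∃ k', Horiz 1 k = Vert k' := fun ⟨k', h⟩ => Horiz_ne_Vert _ _ _ h
  have h₂ : ¬∃ k', Horiz 1 k = Horiz 0 k' := fun ⟨k', h⟩ => one_ne_zero (Horiz_inj.1 h).1
  have h₃ : ∃ k', Horiz 1 k = Horiz 1 k' := ⟨k, rfl⟩
  rw [dominoVar, dif_neg h₁, dif_neg h₂, dif_pos h₃, ← (Horiz_inj.1 h₃.choose_spec).2]

theorem dominoVar_injOn (n : ℕ) : Set.InjOn (dominoVar n) {d | IsDomino n d} := by
  rintro _ (⟨k, -, rfl⟩ | ⟨i, hi, k, hk, rfl⟩) _ (⟨k', -, rfl⟩ | ⟨i', hi', k', hk', rfl⟩) h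
  · simp only [dominoVar_Vert, Sum.inr.injEq, add_left_inj] at h
    rw [h]
  · interval_cases i' <;> simp at h
  · interval_cases i <;> simp at h
  · interval_cases i <;> interval_cases i' <;> simp [Horiz_inj] at h ⊢ <;> omega

theorem IsDomino.eq_of_mem {n : ℕ} {d : Finset (ℕ × ℕ)} (hd : IsDomino n d) {i j : ℕ}
    (h : (i, j) ∈ d) : d = Vert j ∨ d = Horiz i j ∨ ∃ k, j = k + 1 ∧ d = Horiz i k := by
  rcases hd with ⟨k, -, rfl⟩ | ⟨i', -, k, -, rfl⟩ <;> simp only [mem_Vert, mem_Horiz,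
    Prod.mk.injEq] at h
  · exact Or.inl (by rw [h.elim And.right And.right])
  · rcases h with ⟨rfl, rfl⟩ | ⟨rfl, rfl⟩
    exacts [Or.inr (Or.inl rfl), Or.inr (Or.inr ⟨k, rfl, rfl⟩)]

namespace IsTiling

variable {n : ℕ} {T : Finset (Finset (ℕ × ℕ))}

theorem eq_of_mem_of_mem (hT : IsTiling n T) {d e : Finset (ℕ × ℕ)} (hd : d ∈ T) (he : e ∈ T)
    {c : ℕ × ℕ} (hcd : c ∈ d) (hce : c ∈ e) : d = e :=
  by_contra fun hne => Finset.disjoint_left.1 (hT.2.2 d hd e he hne) hcd hce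

theorem lt_of_mem (hT : IsTiling n T) {d : Finset (ℕ × ℕ)} (hd : d ∈ T) {c : ℕ × ℕ}
    (hc : c ∈ d) : c.2 < n :=
  ((hT.2.1 c).2 ⟨d, hd, hc⟩).2

theorem Vert_mem_or_Horiz_mem (hT : IsTiling n T) {k : ℕ} (hV : Vert (k + 2) ∈ T) :
    Vert (k + 1) ∈ T ∨ Horiz 0 k ∈ T ∧ Horiz 1 k ∈ T := by
  have hk : k + 2 < n := hT.lt_of_mem hV (c := (0, k + 2)) (by simp)
  obtain ⟨d, hdT, hd⟩ := (hT.2.1 (0, k + 1)).1 ⟨by simp, by omega⟩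
  rcases (hT.1 d hdT).eq_of_mem hd with rfl | rfl | ⟨j, hj, rfl⟩
  · exact Or.inl hdT
  · exact absurd (hT.eq_of_mem_of_mem hdT hV (c := (0, k + 2)) (by simp) (by simp))
      (Horiz_ne_Vert _ _ _)
  obtain rfl : k = j := by omega
  obtain ⟨e, heT, he⟩ := (hT.2.1 (1, k + 1)).1 ⟨by simp, by omega⟩
  rcases (hT.1 e heT).eq_of_mem he with rfl | rfl | ⟨j, hj, rfl⟩
  · exact absurd (hT.eq_of_mem_of_mem hdT heT (c := (0, k + 1)) (by simp) (by simp))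
      (Horiz_ne_Vert _ _ _)
  · exact absurd (hT.eq_of_mem_of_mem heT hV (c := (1, k + 2)) (by simp) (by simp))
      (Horiz_ne_Vert _ _ _)
  obtain rfl : k = j := by omega
  exact Or.inr ⟨hdT, heT⟩

end IsTiling

noncomputable def tilingExp (n : ℕ) (T : Finset (Finset (ℕ × ℕ))) : (ℕ ⊕ ℕ) →₀ ℕ :=
  ∑ d ∈ T, Finsupp.single (dominoVar n d) 1

theorem dominoMonomial_eq_monomial (K : Type*) [Field K] (n : ℕ) (T : Finset (Finset (ℕ × ℕ))) :
    dominoMonomial K n T = monomial (tilingExp n T) 1 := by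
  rw [tilingExp, monomial_sum_one]
  rfl

theorem tilingExp_mono {n : ℕ} {S T : Finset (Finset (ℕ × ℕ))} (h : S ⊆ T) :
    tilingExp n S ≤ tilingExp n T :=
  Finset.sum_le_sum_of_subset h

theorem single_le_tilingExp {n : ℕ} {T : Finset (Finset (ℕ × ℕ))} {d : Finset (ℕ × ℕ)}
    (hd : d ∈ T) : Finsupp.single (dominoVar n d) 1 ≤ tilingExp n T := by
  simpa [tilingExp] using tilingExp_mono (n := n) (Finset.singleton_subset_iff.2 hd)

theorem IsTiling.single_le_tilingExp_iff {n : ℕ} {T : Finset (Finset (ℕ × ℕ))}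
    (hT : IsTiling n T) {d : Finset (ℕ × ℕ)} (hd : IsDomino n d) :
    Finsupp.single (dominoVar n d) 1 ≤ tilingExp n T ↔ d ∈ T := by
  refine ⟨fun h => ?_, single_le_tilingExp⟩
  rw [Finsupp.single_le_iff, tilingExp, Finsupp.finsetSum_apply] at h
  obtain ⟨e, heT, he⟩ := Finset.exists_ne_zero_of_sum_ne_zero (Nat.one_le_iff_ne_zero.1 h)
  rwa [dominoVar_injOn n (hT.1 e heT) hd (by simpa [Finsupp.single_apply] using he)] at heT

theorem IsTiling.xor_single_le_sup {n k : ℕ} {T S : Finset (Finset (ℕ × ℕ))}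
    (hT : IsTiling n T) (hV : Vert (k + 2) ∈ T) (hS : IsTiling n S) (hH : Horiz 0 (k + 1) ∈ S) :
    Xor (Finsupp.single (dominoVar n (Vert (k + 1))) 1 ≤ tilingExp n T ⊔ tilingExp n S)
      (Finsupp.single (dominoVar n (Horiz 0 k)) 1 + Finsupp.single (dominoVar n (Horiz 1 k)) 1 ≤
        tilingExp n T ⊔ tilingExp n S) := by
  have hk : k + 2 < n := hT.lt_of_mem hV (c := (0, k + 2)) (by simp)
  have hVd : IsDomino n (Vert (k + 1)) := Or.inl ⟨k + 1, by omega, rfl⟩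
  have hHd : IsDomino n (Horiz 0 k) := Or.inr ⟨0, by norm_num, k, by omega, rfl⟩
  have hT_VH : Vert (k + 1) ∈ T → Horiz 0 k ∉ T := fun h₁ h₂ =>
    Horiz_ne_Vert _ _ _ (hT.eq_of_mem_of_mem h₂ h₁ (c := (0, k + 1)) (by simp) (by simp))
  have hS_V : Vert (k + 1) ∉ S := fun h =>
    Horiz_ne_Vert _ _ _ (hS.eq_of_mem_of_mem hH h (c := (0, k + 1)) (by simp) (by simp))
  have hS_H : Horiz 0 k ∉ S := fun h => by
    simpa [Horiz_inj] using hS.eq_of_mem_of_mem hH h (c := (0, k + 1)) (by simp) (by simp)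
  rw [xor_iff_or_and_not_and]
  constructor
  · rcases hT.Vert_mem_or_Horiz_mem hV with h | ⟨h₀, h₁⟩
    · exact Or.inl (le_sup_of_le_left (single_le_tilingExp h))
    · refine Or.inr (le_sup_of_le_left ?_)
      have hne : Horiz 0 k ≠ Horiz 1 k := by simp [Horiz_inj]
      simpa [tilingExp, Finset.sum_pair hne] using
        tilingExp_mono (n := n) (Finset.insert_subset h₀ (Finset.singleton_subset_iff.2 h₁))
  · rintro ⟨hy, hx⟩
    replace hx := le_self_add.trans hx
    rw [Finsupp.single_one_le_sup_iff, hT.single_le_tilingExp_iff hVd,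
      hS.single_le_tilingExp_iff hVd] at hy
    rw [Finsupp.single_one_le_sup_iff, hT.single_le_tilingExp_iff hHd,
      hS.single_le_tilingExp_iff hHd] at hx
    exact hT_VH (hy.resolve_right hS_V) (hx.resolve_right hS_H)

theorem Vn_eq_span (K : Type*) [Field K] (n : ℕ) :
    Vn K n = Ideal.span ((fun w => monomial w (1 : K)) ''
      (tilingExp n '' {T | IsTiling n T ∧ Vert (n - 1) ∈ T})) := by
  rw [Set.image_image, Vn]
  congr 1
  ext p
  simp [dominoMonomial_eq_monomial, eq_comm, and_assoc]

theorem Un_eq_span (K : Type*) [Field K] (n : ℕ) :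
    Un K n = Ideal.span ((fun w => monomial w (1 : K)) ''
      (tilingExp n '' {T | IsTiling n T ∧ Horiz 0 (n - 2) ∈ T ∧ Horiz 1 (n - 2) ∈ T})) := by
  rw [Set.image_image, Un]
  congr 1
  ext p
  simp [dominoMonomial_eq_monomial, eq_comm, and_assoc]

/-- every minimal generator of V_n ∩ U_n is divisible by y_{n-1} or by
x_{n-2}x_{2n-3}, and not both, and V_n ∩ U_n decomposes as the sum of the ideals
generated by the two corresponding subsets of minimal generators. -/
theorem intersection_splitting (K : Type*) [Field K] :
    ∀ n : ℕ, 4 ≤ n →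
      (∀ w ∈ minGens (Vn K n ⊓ Un K n),
        Xor' (Finsupp.single (Sum.inr (n - 1)) 1 ≤ w)
          ((Finsupp.single (Sum.inl (n - 2)) 1 + Finsupp.single (Sum.inl (2 * n - 3)) 1) ≤ w)) ∧
      Vn K n ⊓ Un K n =
        Ideal.span ((fun w => MvPolynomial.monomial w (1 : K)) ''
          {w ∈ minGens (Vn K n ⊓ Un K n) | Finsupp.single (Sum.inr (n - 1)) 1 ≤ w}) ⊔
        Ideal.span ((fun w => MvPolynomial.monomial w (1 : K)) ''
          {w ∈ minGens (Vn K n ⊓ Un K n) |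
            (Finsupp.single (Sum.inl (n - 2)) 1 + Finsupp.single (Sum.inl (2 * n - 3)) 1) ≤ w}) := by
  intro n hn
  obtain ⟨k, rfl⟩ : ∃ k, n = k + 3 := ⟨n - 3, by omega⟩
  rw [Vn_eq_span, Un_eq_span, span_monomial_image_inf_span_monomial_image,
    show k + 3 - 1 = k + 1 + 1 by omega, show k + 3 - 2 = k + 1 by omega,
    show 2 * (k + 3) - 3 = k + 3 + k by omega, ← dominoVar_Vert (k + 3),
    ← dominoVar_Horiz_zero (k + 3), ← dominoVar_Horiz_one]
  refine ⟨?xor, eq_span_sup_span_minGens_of_eq_span rfl fun w hw => Xor.or (?xor w hw)⟩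
  intro w hw
  obtain ⟨_, ⟨T, ⟨hT, hV⟩, rfl⟩, _, ⟨S, ⟨hS, hH, -⟩, rfl⟩, rfl⟩ :=
    minGens_span_monomial_image_subset _ hw
  exact hT.xor_single_le_sup hV hS hH
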